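/- arXiv:2007.11269 — 8 statements merged into one kernel-verified Lean document; each statement's English description precedes it below -/
import Mathlib

section
/- Let K ∈ ℂ^{n×n} be invertible, C ∈ ℂ^{p×n}, and V, W ∈ ℂ^{n×r} with W^H K V invertible and the column span of K^{-H} C^H contained in the column span of W. Then (C V) (W^H K V)⁻¹ W^H = C K⁻¹. -/
open Matrix

/-- Dual (output-side) projection identity: if `span(K⁻ᴴ Cᴴ) ⊆ span(W)`,
then `(C V) (Wᴴ K V)⁻¹ Wᴴ = C K⁻¹`. -/
theorem dual_projection_identity {n p r : ℕ}
    (K : Matrix (Fin n) (Fin n) ℂ) (C : Matrix (Fin p) (Fin n) ℂ)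
    (V W : Matrix (Fin n) (Fin r) ℂ)
    (hK : IsUnit K.det) (hKhat : IsUnit (Wᴴ * K * V).det)
    (hspan : ∃ X : Matrix (Fin r) (Fin p) ℂ, W * X = (Kᴴ)⁻¹ * Cᴴ) :
    (C * V) * (Wᴴ * K * V)⁻¹ * Wᴴ = C * K⁻¹ := by
  obtain ⟨X, hX⟩ := hspan
  have hCK : C * K⁻¹ = Xᴴ * Wᴴ := by
    have := congrArg conjTranspose hX
    simpa [conjTranspose_mul, conjTranspose_nonsing_inv] using this.symm
  have hCV : C * V = Xᴴ * (Wᴴ * K * V) := by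
    have : C * V = C * K⁻¹ * (K * V) := by
      rw [Matrix.mul_assoc, ← Matrix.mul_assoc K⁻¹, Matrix.nonsing_inv_mul _ hK, Matrix.one_mul]
    rw [this, hCK]
    rw [Matrix.mul_assoc, Matrix.mul_assoc]
  rw [hCV, Matrix.mul_assoc Xᴴ, Matrix.mul_nonsing_inv _ hKhat, Matrix.mul_one, hCK]
end

section
/- Interpolation of the first transfer function: let K(s,μ) be an invertible matrix-valued function, B(s,μ) ∈ ℂ^{n×m}, C(s,μ) ∈ ℂ^{p×n}. Define the reduced quantities K̂ = W^H K V, B̂ = W^H B, Ĉ = C V for V, W ∈ ℂ^{n×r}. Fix σ ∈ ℂ and μ̂, and assume K̂(σ,μ̂) is invertible. If the column span of K(σ,μ̂)⁻¹ B(σ,μ̂) is contained in span(V), then C(σ,μ̂) K(σ,μ̂)⁻¹ B(σ,μ̂) = Ĉ(σ,μ̂) K̂(σ,μ̂)⁻¹ B̂(σ,μ̂). -/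
open Matrix

/-- Interpolation of the first structured transfer function
`G₁(s,μ) = C(s,μ) K(s,μ)⁻¹ B(s,μ)` by the Petrov–Galerkin reduced model
`Ĝ₁ = Ĉ K̂⁻¹ B̂`, when `span(K(σ,μ̂)⁻¹ B(σ,μ̂)) ⊆ span(V)`. -/
theorem first_transfer_function_interpolation {n m p r d : ℕ}
    (K : ℂ → (Fin d → ℝ) → Matrix (Fin n) (Fin n) ℂ)
    (B : ℂ → (Fin d → ℝ) → Matrix (Fin n) (Fin m) ℂ)
    (C : ℂ → (Fin d → ℝ) → Matrix (Fin p) (Fin n) ℂ)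
    (V W : Matrix (Fin n) (Fin r) ℂ)
    (σ : ℂ) (μ : Fin d → ℝ)
    (hK : IsUnit (K σ μ).det)
    (hKhat : IsUnit (Wᴴ * K σ μ * V).det)
    (hspan : ∃ X : Matrix (Fin r) (Fin m) ℂ, V * X = (K σ μ)⁻¹ * B σ μ) :
    C σ μ * (K σ μ)⁻¹ * B σ μ =
      (C σ μ * V) * (Wᴴ * K σ μ * V)⁻¹ * (Wᴴ * B σ μ) := by
  obtain ⟨X, hX⟩ := hspan
  have hB : K σ μ * (V * X) = B σ μ := by
    rw [hX, ← Matrix.mul_assoc, mul_nonsing_inv _ hK, Matrix.one_mul]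
  have h2 : Wᴴ * B σ μ = (Wᴴ * K σ μ * V) * X := by
    rw [← hB]; simp only [Matrix.mul_assoc]
  have hX' : (Wᴴ * K σ μ * V)⁻¹ * (Wᴴ * B σ μ) = X := by
    rw [h2, ← Matrix.mul_assoc, nonsing_inv_mul _ hKhat, Matrix.one_mul]
  rw [Matrix.mul_assoc (C σ μ * V), hX', Matrix.mul_assoc, ← hX, ← Matrix.mul_assoc]
end

section
/- Dual interpolation of the first transfer function: with the same setup as the projection framework, fix ς ∈ ℂ and μ̂, and assume K̂(ς,μ̂) = W^H K(ς,μ̂) V is invertible. If the column span of K(ς,μ̂)^{-H} C(ς,μ̂)^H is contained in span(W), then C(ς,μ̂) K(ς,μ̂)⁻¹ B(ς,μ̂) = C(ς,μ̂) V K̂(ς,μ̂)⁻¹ W^H B(ς,μ̂). -/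
open Matrix

/-- Dual interpolation of the first structured transfer function:
if `span(K(ς,μ̂)⁻ᴴ C(ς,μ̂)ᴴ) ⊆ span(W)` then
`C K⁻¹ B = C V K̂⁻¹ Wᴴ B` at `(ς, μ̂)`. -/
theorem first_transfer_function_dual_interpolation {n m p r d : ℕ}
    (K : ℂ → (Fin d → ℝ) → Matrix (Fin n) (Fin n) ℂ)
    (B : ℂ → (Fin d → ℝ) → Matrix (Fin n) (Fin m) ℂ)
    (C : ℂ → (Fin d → ℝ) → Matrix (Fin p) (Fin n) ℂ)
    (V W : Matrix (Fin n) (Fin r) ℂ)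
    (ς : ℂ) (μ : Fin d → ℝ)
    (hK : IsUnit (K ς μ).det)
    (hKhat : IsUnit (Wᴴ * K ς μ * V).det)
    (hspan : ∃ X : Matrix (Fin r) (Fin p) ℂ, W * X = ((K ς μ)ᴴ)⁻¹ * (C ς μ)ᴴ) :
    C ς μ * (K ς μ)⁻¹ * B ς μ =
      (C ς μ * V) * (Wᴴ * K ς μ * V)⁻¹ * (Wᴴ * B ς μ) := by
  obtain ⟨X, hX⟩ := hspan
  have h1 : Xᴴ * Wᴴ = C ς μ * (K ς μ)⁻¹ := by
    have := congrArg conjTranspose hX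
    simpa [Matrix.conjTranspose_mul, Matrix.conjTranspose_nonsing_inv] using this
  have hCV : C ς μ * (K ς μ)⁻¹ * (K ς μ) = C ς μ := by
    rw [Matrix.mul_assoc, Matrix.nonsing_inv_mul _ hK, Matrix.mul_one]
  have h2 : C ς μ * V = Xᴴ * (Wᴴ * K ς μ * V) := by
    rw [← Matrix.mul_assoc, ← Matrix.mul_assoc, h1,
      Matrix.nonsing_inv_mul_cancel_right _ _ hK]
  rw [h2, Matrix.mul_nonsing_inv_cancel_right _ _ hKhat, ← h1, Matrix.mul_assoc]
end

section
/- SISO second subsystem interpolation: let K(s) ∈ ℂ^{n×n} be invertible at σ₁ and σ₂, N ∈ ℂ^{n×n}, b ∈ ℂ^n, c ∈ ℂ^n. Let V ∈ ℂ^{n×r} contain in its column span both v₁ := K(σ₁)⁻¹ b and v₂ := K(σ₂)⁻¹ N v₁, let W ∈ ℂ^{n×r}, and suppose W^H K(σ₁) V and W^H K(σ₂) V are invertible. Then c^H K(σ₂)⁻¹ N K(σ₁)⁻¹ b = (c^H V)(W^H K(σ₂) V)⁻¹ (W^H N V)(W^H K(σ₁) V)⁻¹ (W^H b). -/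
open Matrix

lemma inv_mulVec_of_mulVec_eq {m : ℕ} (A : Matrix (Fin m) (Fin m) ℂ)
    (hA : IsUnit A.det) {x u : Fin m → ℂ} (h : A *ᵥ x = u) :
    A⁻¹ *ᵥ u = x := by
  subst h
  rw [mulVec_mulVec, Matrix.nonsing_inv_mul A hA, one_mulVec]

/-- SISO second subsystem interpolation (Theorem 1(a) with k = 2):
if `v₁ = K(σ₁)⁻¹ b` and `v₂ = K(σ₂)⁻¹ N v₁` lie in `span(V)`, then the
second transfer function is matched. -/
theorem siso_second_subsystem_interpolation {n r : ℕ}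
    (K : ℂ → Matrix (Fin n) (Fin n) ℂ) (N : Matrix (Fin n) (Fin n) ℂ)
    (b c : Fin n → ℂ) (V W : Matrix (Fin n) (Fin r) ℂ) (σ₁ σ₂ : ℂ)
    (hK1 : IsUnit (K σ₁).det) (hK2 : IsUnit (K σ₂).det)
    (hKhat1 : IsUnit (Wᴴ * K σ₁ * V).det)
    (hKhat2 : IsUnit (Wᴴ * K σ₂ * V).det)
    (hv1 : ∃ y : Fin r → ℂ, V *ᵥ y = (K σ₁)⁻¹ *ᵥ b)
    (hv2 : ∃ y : Fin r → ℂ, V *ᵥ y = (K σ₂)⁻¹ *ᵥ (N *ᵥ ((K σ₁)⁻¹ *ᵥ b))) :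
    star c ⬝ᵥ ((K σ₂)⁻¹ *ᵥ (N *ᵥ ((K σ₁)⁻¹ *ᵥ b))) =
      (star c ᵥ* V) ⬝ᵥ ((Wᴴ * K σ₂ * V)⁻¹ *ᵥ ((Wᴴ * N * V) *ᵥ
        ((Wᴴ * K σ₁ * V)⁻¹ *ᵥ (Wᴴ *ᵥ b)))) := by
  obtain ⟨y₁, hy₁⟩ := hv1
  obtain ⟨y₂, hy₂⟩ := hv2
  -- K σ₁ *ᵥ (V *ᵥ y₁) = b
  have hb : (K σ₁) *ᵥ (V *ᵥ y₁) = b := by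
    rw [hy₁, mulVec_mulVec, Matrix.mul_nonsing_inv _ hK1, one_mulVec]
  have h1 : (Wᴴ * K σ₁ * V) *ᵥ y₁ = Wᴴ *ᵥ b := by
    rw [← mulVec_mulVec, ← mulVec_mulVec, hb]
  have h1' : (Wᴴ * K σ₁ * V)⁻¹ *ᵥ (Wᴴ *ᵥ b) = y₁ :=
    inv_mulVec_of_mulVec_eq _ hKhat1 h1
  have hu : (K σ₂) *ᵥ (V *ᵥ y₂) = N *ᵥ ((K σ₁)⁻¹ *ᵥ b) := by
    rw [hy₂, mulVec_mulVec, Matrix.mul_nonsing_inv _ hK2, one_mulVec]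
  have h2 : (Wᴴ * K σ₂ * V) *ᵥ y₂ = (Wᴴ * N * V) *ᵥ y₁ := by
    rw [← mulVec_mulVec, ← mulVec_mulVec, hu, ← mulVec_mulVec, ← mulVec_mulVec, hy₁]
  have h2' : (Wᴴ * K σ₂ * V)⁻¹ *ᵥ ((Wᴴ * N * V) *ᵥ y₁) = y₂ :=
    inv_mulVec_of_mulVec_eq _ hKhat2 h2
  rw [h1', h2', ← hy₂]
  rw [dotProduct_mulVec]
end

section
/- SISO two-sided mixed interpolation: let K(s) ∈ ℂ^{n×n} be invertible at σ and ς, N ∈ ℂ^{n×n}, b, c ∈ ℂ^n. Suppose span(V) contains K(σ)⁻¹b, span(W) contains K(ς)^{-H} c, and W^H K(σ) V and W^H K(ς) V are invertible. Then c^H K(ς)⁻¹ N K(σ)⁻¹ b = (c^H V)(W^H K(ς) V)⁻¹ (W^H N V)(W^H K(σ) V)⁻¹ (W^H b). -/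
open Matrix

/-- SISO two-sided mixed interpolation (Theorem 1(c) with q = η = 1):
the left factor is matched via `W` and the right factor via `V`. -/
theorem siso_two_sided_mixed_interpolation {n r : ℕ}
    (K : ℂ → Matrix (Fin n) (Fin n) ℂ) (N : Matrix (Fin n) (Fin n) ℂ)
    (b c : Fin n → ℂ) (V W : Matrix (Fin n) (Fin r) ℂ) (σ ς : ℂ)
    (hK1 : IsUnit (K σ).det) (hK2 : IsUnit (K ς).det)
    (hKhat1 : IsUnit (Wᴴ * K σ * V).det)
    (hKhat2 : IsUnit (Wᴴ * K ς * V).det)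
    (hv : ∃ y : Fin r → ℂ, V *ᵥ y = (K σ)⁻¹ *ᵥ b)
    (hw : ∃ y : Fin r → ℂ, W *ᵥ y = ((K ς)ᴴ)⁻¹ *ᵥ c) :
    star c ⬝ᵥ ((K ς)⁻¹ *ᵥ (N *ᵥ ((K σ)⁻¹ *ᵥ b))) =
      (star c ᵥ* V) ⬝ᵥ ((Wᴴ * K ς * V)⁻¹ *ᵥ ((Wᴴ * N * V) *ᵥ
        ((Wᴴ * K σ * V)⁻¹ *ᵥ (Wᴴ *ᵥ b)))) := by
  obtain ⟨y, hy⟩ := hv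
  obtain ⟨z, hz⟩ := hw
  have hK2H : IsUnit ((K ς)ᴴ).det := by
    rw [Matrix.det_conjTranspose]; exact hK2.star
  -- c = (K ς)ᴴ *ᵥ (W *ᵥ z)
  have hc : (K ς)ᴴ *ᵥ (W *ᵥ z) = c := by
    rw [hz, Matrix.mulVec_mulVec, Matrix.mul_nonsing_inv _ hK2H, Matrix.one_mulVec]
  -- star c as a vecMul
  have hcstar : star c = star z ᵥ* (Wᴴ * K ς) := by
    rw [← hc, Matrix.star_mulVec, Matrix.conjTranspose_conjTranspose,
      Matrix.star_mulVec, Matrix.vecMul_vecMul]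
  -- (Wᴴ K σ V)⁻¹ (Wᴴ b) = y
  have hb : (K σ) *ᵥ (V *ᵥ y) = b := by
    rw [hy, Matrix.mulVec_mulVec, Matrix.mul_nonsing_inv _ hK1, Matrix.one_mulVec]
  have hWb : (Wᴴ * K σ * V) *ᵥ y = Wᴴ *ᵥ b := by
    rw [← hb, ← Matrix.mulVec_mulVec, ← Matrix.mulVec_mulVec, Matrix.mulVec_mulVec]
  have hy' : (Wᴴ * K σ * V)⁻¹ *ᵥ (Wᴴ *ᵥ b) = y := by
    rw [← hWb, Matrix.mulVec_mulVec, Matrix.nonsing_inv_mul _ hKhat1, Matrix.one_mulVec]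
  have L : star c ⬝ᵥ ((K ς)⁻¹ *ᵥ (N *ᵥ ((K σ)⁻¹ *ᵥ b))) =
      star z ⬝ᵥ ((Wᴴ * N * V) *ᵥ y) := by
    rw [hcstar, ← hy, ← Matrix.dotProduct_mulVec]
    simp only [Matrix.mulVec_mulVec]
    rw [← Matrix.mul_assoc (Wᴴ * K ς), Matrix.mul_nonsing_inv_cancel_right _ _ hK2,
      ← Matrix.mul_assoc]
  have R : (star c ᵥ* V) ⬝ᵥ ((Wᴴ * K ς * V)⁻¹ *ᵥ ((Wᴴ * N * V) *ᵥ
      ((Wᴴ * K σ * V)⁻¹ *ᵥ (Wᴴ *ᵥ b)))) = star z ⬝ᵥ ((Wᴴ * N * V) *ᵥ y) := by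
    rw [hy', hcstar, Matrix.vecMul_vecMul, ← Matrix.dotProduct_mulVec,
      Matrix.mulVec_mulVec, Matrix.mul_nonsing_inv _ hKhat2, Matrix.one_mulVec]
  rw [L, R]
end

section
/- Implicit matching of parameter sensitivity (SISO, first transfer function): let K : ℂ × ℝ → ℂ^{n×n} be differentiable in the parameter μ, b, c ∈ ℂ^n constant. Fix σ ∈ ℂ, μ̂ ∈ ℝ, with K(σ,μ̂) invertible. Suppose V, W ∈ ℂ^{n×r} satisfy: K(σ,μ̂)⁻¹ b ∈ span(V), K(σ,μ̂)^{-H} c ∈ span(W), and K̂(σ,μ̂) := W^H K(σ,μ̂) V is invertible. Then, writing K' := ∂_μ K(σ,μ̂) and K̂' := W^H K' V, one has c^H K(σ,μ̂)⁻¹ K' K(σ,μ̂)⁻¹ b = (c^H V) K̂(σ,μ̂)⁻¹ K̂' K̂(σ,μ̂)⁻¹ (W^H b). -/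
open Matrix

/-- Implicit matching of parameter sensitivity (SISO, first transfer function):
with `K' := ∂_μ K(σ,μ̂)` (entrywise) and `K̂' := Wᴴ K' V`, the sensitivity
term `cᴴ K⁻¹ K' K⁻¹ b` is matched by the reduced model. -/
theorem siso_parameter_sensitivity_matching {n r : ℕ}
    (K : ℂ → ℝ → Matrix (Fin n) (Fin n) ℂ)
    (b c : Fin n → ℂ) (V W : Matrix (Fin n) (Fin r) ℂ)
    (σ : ℂ) (μ : ℝ)
    (hdiff : ∀ i j, DifferentiableAt ℝ (fun t => K σ t i j) μ)
    (K' : Matrix (Fin n) (Fin n) ℂ)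
    (hK' : ∀ i j, K' i j = deriv (fun t => K σ t i j) μ)
    (hK : IsUnit (K σ μ).det)
    (hKhat : IsUnit (Wᴴ * K σ μ * V).det)
    (hv : ∃ y : Fin r → ℂ, V *ᵥ y = (K σ μ)⁻¹ *ᵥ b)
    (hw : ∃ y : Fin r → ℂ, W *ᵥ y = ((K σ μ)ᴴ)⁻¹ *ᵥ c) :
    star c ⬝ᵥ ((K σ μ)⁻¹ *ᵥ (K' *ᵥ ((K σ μ)⁻¹ *ᵥ b))) =
      (star c ᵥ* V) ⬝ᵥ ((Wᴴ * K σ μ * V)⁻¹ *ᵥ ((Wᴴ * K' * V) *ᵥ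
        ((Wᴴ * K σ μ * V)⁻¹ *ᵥ (Wᴴ *ᵥ b)))) := by
  obtain ⟨y, hy⟩ := hv
  obtain ⟨z, hz⟩ := hw
  set A := K σ μ with hA
  -- step 1: K̂⁻¹ (Wᴴ b) = y
  have hinvb : A *ᵥ (A⁻¹ *ᵥ b) = b := by
    rw [Matrix.mulVec_mulVec, Matrix.mul_nonsing_inv _ hK, Matrix.one_mulVec]
  have h1 : (Wᴴ * A * V)⁻¹ *ᵥ (Wᴴ *ᵥ b) = y := by
    have : (Wᴴ * A * V) *ᵥ y = Wᴴ *ᵥ b := by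
      rw [← Matrix.mulVec_mulVec, ← Matrix.mulVec_mulVec, hy, hinvb]
    rw [← this, Matrix.mulVec_mulVec, Matrix.nonsing_inv_mul _ hKhat,
      Matrix.one_mulVec]
  -- step 2: star c ᵥ* V = star z ᵥ* (Wᴴ A V)
  have hc : Aᴴ *ᵥ (W *ᵥ z) = c := by
    rw [hz, Matrix.mulVec_mulVec, Matrix.mul_nonsing_inv _ (by simpa using hK.star),
      Matrix.one_mulVec]
  have h2 : star c ᵥ* V = star z ᵥ* (Wᴴ * A * V) := by
    rw [← hc, star_mulVec, conjTranspose_conjTranspose, star_mulVec,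
      Matrix.vecMul_vecMul, Matrix.vecMul_vecMul, Matrix.mul_assoc]
  -- step 3: relate both sides
  have h3 : star ((Aᴴ)⁻¹ *ᵥ c) = star c ᵥ* A⁻¹ := by
    rw [star_mulVec, Matrix.conjTranspose_nonsing_inv, conjTranspose_conjTranspose]
  calc star c ⬝ᵥ (A⁻¹ *ᵥ (K' *ᵥ (A⁻¹ *ᵥ b)))
      = (star c ᵥ* A⁻¹) ⬝ᵥ (K' *ᵥ (A⁻¹ *ᵥ b)) := by
        rw [Matrix.dotProduct_mulVec]
    _ = star ((Aᴴ)⁻¹ *ᵥ c) ⬝ᵥ (K' *ᵥ (V *ᵥ y)) := by rw [h3, hy]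
    _ = (star z ᵥ* Wᴴ) ⬝ᵥ (K' *ᵥ (V *ᵥ y)) := by rw [← hz, star_mulVec]
    _ = star z ⬝ᵥ ((Wᴴ * K' * V) *ᵥ y) := by
        rw [← Matrix.dotProduct_mulVec, Matrix.mulVec_mulVec, Matrix.mulVec_mulVec]
    _ = (star z ᵥ* (Wᴴ * A * V)) ⬝ᵥ ((Wᴴ * A * V)⁻¹ *ᵥ ((Wᴴ * K' * V) *ᵥ y)) := by
        rw [← Matrix.dotProduct_mulVec, Matrix.mulVec_mulVec, Matrix.mulVec_mulVec,
          Matrix.mul_nonsing_inv _ hKhat, Matrix.one_mul]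
    _ = (star c ᵥ* V) ⬝ᵥ ((Wᴴ * A * V)⁻¹ *ᵥ ((Wᴴ * K' * V) *ᵥ
          ((Wᴴ * A * V)⁻¹ *ᵥ (Wᴴ *ᵥ b)))) := by rw [h2, h1]
end

section
/- Frequency-derivative (Hermite) interpolation, SISO k=1: let K : ℂ → ℂ^{n×n} be differentiable at σ with K(σ) invertible, b, c ∈ ℂ^n constant. Suppose V contains both K(σ)⁻¹b and d/ds[K(s)⁻¹ b]|_{s=σ} in its column span, W contains K(σ)^{-H}c, K̂(σ) := W^H K(σ) V is invertible, and K̂ is differentiable at σ. Then d/ds [c^H K(s)⁻¹ b]|_{s=σ} = d/ds [(c^H V) K̂(s)⁻¹ (W^H b)]|_{s=σ}. -/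
/-!
Both derivatives come from `d(K⁻¹) = -K⁻¹ K' K⁻¹`. Write `V y = K(σ)⁻¹ b` and
`W z = K(σ)⁻ᴴ c`. The reduced solves reproduce these coefficient vectors:
`K̂(σ)⁻¹ Wᴴ b = y` and `cᴴ V K̂(σ)⁻¹ = zᴴ`. Hence
`Ĝ₁'(σ) = -zᴴ Wᴴ K'(σ) V y = -cᴴ K(σ)⁻¹ K'(σ) K(σ)⁻¹ b = G₁'(σ)`.
-/

open Matrix

section EntrywiseDerivatives

variable {𝕜 : Type*} [NontriviallyNormedField 𝕜] {l m n o : Type*} [Fintype m] [Fintype n]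
  {σ : 𝕜} {M : 𝕜 → Matrix m n 𝕜} {M' : Matrix m n 𝕜}

theorem Matrix.hasDerivAt_dotProduct_mulVec
    (hM : ∀ i j, HasDerivAt (fun s => M s i j) (M' i j) σ) (u : m → 𝕜) (v : n → 𝕜) :
    HasDerivAt (fun s => u ⬝ᵥ (M s *ᵥ v)) (u ⬝ᵥ (M' *ᵥ v)) σ :=
  HasDerivAt.fun_sum fun i _ =>
    (HasDerivAt.fun_sum fun j _ => (hM i j).mul_const (v j)).const_mul (u i)

theorem Matrix.hasDerivAt_mul_mul_apply
    (hM : ∀ i j, HasDerivAt (fun s => M s i j) (M' i j) σ) (P : Matrix l m 𝕜) (Q : Matrix n o 𝕜)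
    (i : l) (j : o) : HasDerivAt (fun s => (P * M s * Q) i j) ((P * M' * Q) i j) σ :=
  HasDerivAt.fun_sum fun k _ =>
    (HasDerivAt.fun_sum fun k' _ => (hM k' k).const_mul (P i k')).mul_const (Q k j)

end EntrywiseDerivatives

section InverseDerivative

-- Any norm would do; the operator norm makes `Matrix n n 𝕜` a complete normed algebra, where
-- the derivative of `Ring.inverse` is known.
attribute [local instance] Matrix.linftyOpNormedRing Matrix.linftyOpNormedAlgebra

variable {𝕜 : Type*} [RCLike 𝕜] {n : Type*} [Fintype n] [DecidableEq n]
  {σ : 𝕜} {K : 𝕜 → Matrix n n 𝕜} {K' : Matrix n n 𝕜}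

theorem Matrix.hasDerivAt_inv_apply
    (hK : ∀ i j, HasDerivAt (fun s => K s i j) (K' i j) σ) (hdet : IsUnit (K σ).det) (i j : n) :
    HasDerivAt (fun s => (K s)⁻¹ i j) (-((K σ)⁻¹ * K' * (K σ)⁻¹) i j) σ := by
  let e : (n → n → 𝕜) ≃L[𝕜] Matrix n n 𝕜 := (ofLinearEquiv 𝕜).toContinuousLinearEquiv
  have hK_mat : HasDerivAt K K' σ :=
    e.hasFDerivAt.comp_hasDerivAt σ (hasDerivAt_pi.2 fun i => hasDerivAt_pi.2 (hK i))
  obtain ⟨u, hu⟩ := (isUnit_iff_isUnit_det _).2 hdet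
  have hinv : HasDerivAt (fun s => (K s)⁻¹) (-((K σ)⁻¹ * K' * (K σ)⁻¹)) σ := by
    rw [← hu, ← coe_units_inv,
      show (fun s => (K s)⁻¹) = Ring.inverse ∘ K from funext fun s => nonsing_inv_eq_ringInverse _]
    exact (hasFDerivAt_ringInverse u).comp_hasDerivAt_of_eq σ hK_mat hu
  exact hasDerivAt_pi.1 (hasDerivAt_pi.1 (e.symm.hasFDerivAt.comp_hasDerivAt σ hinv) i) j

theorem Matrix.hasDerivAt_dotProduct_inv_mulVec
    (hK : ∀ i j, HasDerivAt (fun s => K s i j) (K' i j) σ) (hdet : IsUnit (K σ).det)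
    (u v : n → 𝕜) :
    HasDerivAt (fun s => u ⬝ᵥ ((K s)⁻¹ *ᵥ v))
      (-((u ᵥ* (K σ)⁻¹) ⬝ᵥ (K' *ᵥ ((K σ)⁻¹ *ᵥ v)))) σ := by
  convert hasDerivAt_dotProduct_mulVec (M' := -((K σ)⁻¹ * K' * (K σ)⁻¹))
    (hasDerivAt_inv_apply hK hdet) u v using 1
  rw [neg_mulVec, dotProduct_neg, ← mulVec_mulVec, ← mulVec_mulVec, dotProduct_mulVec u]

end InverseDerivative

section ReducedSolve

variable {R : Type*} [CommRing R] {n r : Type*} [Fintype n] [Fintype r] [DecidableEq r]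
  {P : Matrix r n R} {K : Matrix n n R} {V : Matrix n r R}

theorem Matrix.nonsing_inv_mulVec_eq_of_mulVec_eq (hdet : IsUnit (P * K * V).det)
    {y : r → R} {b : n → R} (hy : K *ᵥ (V *ᵥ y) = b) :
    (P * K * V)⁻¹ *ᵥ (P *ᵥ b) = y := by
  have hKV : (P * K * V) *ᵥ y = P *ᵥ b := by
    simp only [← hy, mulVec_mulVec, Matrix.mul_assoc]
  rw [← hKV, mulVec_mulVec, nonsing_inv_mul _ hdet, one_mulVec]

theorem Matrix.vecMul_nonsing_inv_eq_of_vecMul_eq (hdet : IsUnit (P * K * V).det)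
    {z : r → R} {c : n → R} (hz : z ᵥ* P ᵥ* K = c) :
    c ᵥ* V ᵥ* (P * K * V)⁻¹ = z := by
  have hKV : z ᵥ* (P * K * V) = c ᵥ* V := by
    simp only [← hz, vecMul_vecMul]
  rw [← hKV, vecMul_vecMul, mul_nonsing_inv _ hdet, vecMul_one]

end ReducedSolve

theorem siso_hermite_interpolation_general {n r : ℕ}
    (K : ℂ → Matrix (Fin n) (Fin n) ℂ)
    (b c : Fin n → ℂ) (V W : Matrix (Fin n) (Fin r) ℂ) (σ : ℂ)
    (hdiff : ∀ i j, DifferentiableAt ℂ (fun s => K s i j) σ)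
    (hK : IsUnit (K σ).det)
    (hv0 : ∃ y : Fin r → ℂ, V *ᵥ y = (K σ)⁻¹ *ᵥ b)
    (hw : ∃ y : Fin r → ℂ, W *ᵥ y = ((K σ)ᴴ)⁻¹ *ᵥ c)
    (hKhat : IsUnit (Wᴴ * K σ * V).det) :
    deriv (fun s => star c ⬝ᵥ ((K s)⁻¹ *ᵥ b)) σ =
      deriv (fun s => (star c ᵥ* V) ⬝ᵥ ((Wᴴ * K s * V)⁻¹ *ᵥ (Wᴴ *ᵥ b))) σ := by
  obtain ⟨y, hy⟩ := hv0
  obtain ⟨z, hz⟩ := hw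
  set K' := Matrix.of fun i j => deriv (fun s => K s i j) σ
  have hK' : ∀ i j, HasDerivAt (fun s => K s i j) (K' i j) σ := fun i j => (hdiff i j).hasDerivAt
  have hzW : star z ᵥ* Wᴴ = star c ᵥ* (K σ)⁻¹ := by
    rw [← star_mulVec, hz, star_mulVec, conjTranspose_nonsing_inv, conjTranspose_conjTranspose]
  have hright : (Wᴴ * K σ * V)⁻¹ *ᵥ (Wᴴ *ᵥ b) = y :=
    nonsing_inv_mulVec_eq_of_mulVec_eq hKhat <| by
      rw [hy, mulVec_mulVec, mul_nonsing_inv _ hK, one_mulVec]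
  have hleft : star c ᵥ* V ᵥ* (Wᴴ * K σ * V)⁻¹ = star z :=
    vecMul_nonsing_inv_eq_of_vecMul_eq hKhat <| by
      rw [hzW, vecMul_vecMul, nonsing_inv_mul _ hK, vecMul_one]
  rw [(hasDerivAt_dotProduct_inv_mulVec hK' hK _ _).deriv,
    (hasDerivAt_dotProduct_inv_mulVec (hasDerivAt_mul_mul_apply hK' Wᴴ V) hKhat _ _).deriv,
    hright, hleft, ← hy, ← hzW, ← mulVec_mulVec, ← mulVec_mulVec, dotProduct_mulVec (star z)]

/-- Hermite (frequency-derivative) interpolation of the first transfer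
function `G₁(s) = cᴴ K(s)⁻¹ b` at `σ` (Theorem 2 with k = 1, ℓ₁ = 1). -/
theorem siso_hermite_interpolation {n r : ℕ}
    (K : ℂ → Matrix (Fin n) (Fin n) ℂ)
    (b c : Fin n → ℂ) (V W : Matrix (Fin n) (Fin r) ℂ) (σ : ℂ)
    (hdiff : ∀ i j, DifferentiableAt ℂ (fun s => K s i j) σ)
    (hK : IsUnit (K σ).det)
    (hv0 : ∃ y : Fin r → ℂ, V *ᵥ y = (K σ)⁻¹ *ᵥ b)
    (hv1 : ∃ y : Fin r → ℂ, V *ᵥ y = deriv (fun s => (K s)⁻¹ *ᵥ b) σ)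
    (hw : ∃ y : Fin r → ℂ, W *ᵥ y = ((K σ)ᴴ)⁻¹ *ᵥ c)
    (hKhat : IsUnit (Wᴴ * K σ * V).det)
    (hKhatdiff : ∀ i j, DifferentiableAt ℂ (fun s => (Wᴴ * K s * V) i j) σ) :
    deriv (fun s => star c ⬝ᵥ ((K s)⁻¹ *ᵥ b)) σ =
      deriv (fun s => (star c ᵥ* V) ⬝ᵥ ((Wᴴ * K s * V)⁻¹ *ᵥ (Wᴴ *ᵥ b))) σ :=
  siso_hermite_interpolation_general K b c V W σ hdiff hK hv0 hw hKhat
end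

section
/- MIMO second subsystem interpolation via V: let K(s) ∈ ℂ^{n×n} be invertible at σ₁, σ₂, N ∈ ℂ^{n×(nm)}, B ∈ ℂ^{n×m}, C ∈ ℂ^{p×n}. Set V₁ := K(σ₁)⁻¹ B and V₂ := K(σ₂)⁻¹ N (I_m ⊗ V₁). Suppose V ∈ ℂ^{n×r} satisfies span([V₁, V₂]) ⊆ span(V), W ∈ ℂ^{n×r}, and W^H K(σ₁) V, W^H K(σ₂) V are invertible. Then C K(σ₂)⁻¹ N (I_m ⊗ K(σ₁)⁻¹)(I_m ⊗ B) = (C V)(W^H K(σ₂) V)⁻¹ (W^H N (I_m ⊗ V))(I_m ⊗ (W^H K(σ₁) V)⁻¹)(I_m ⊗ W^H B). -/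
open Matrix Kronecker

/-- MIMO second subsystem interpolation via V (Theorem 1(a) for k = 2):
with `V₁ = K(σ₁)⁻¹ B` and `V₂ = K(σ₂)⁻¹ N (I_m ⊗ V₁)` contained in the
column span of `V`, the second subsystem transfer function is matched. -/
theorem mimo_second_subsystem_interpolation {n m p r : ℕ}
    (K : ℂ → Matrix (Fin n) (Fin n) ℂ)
    (N : Matrix (Fin n) (Fin m × Fin n) ℂ)
    (B : Matrix (Fin n) (Fin m) ℂ) (C : Matrix (Fin p) (Fin n) ℂ)
    (V W : Matrix (Fin n) (Fin r) ℂ) (σ₁ σ₂ : ℂ)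
    (hK1 : IsUnit (K σ₁).det) (hK2 : IsUnit (K σ₂).det)
    (hKhat1 : IsUnit (Wᴴ * K σ₁ * V).det)
    (hKhat2 : IsUnit (Wᴴ * K σ₂ * V).det)
    (hV1 : ∃ X : Matrix (Fin r) (Fin m) ℂ, V * X = (K σ₁)⁻¹ * B)
    (hV2 : ∃ X : Matrix (Fin r) (Fin m × Fin m) ℂ,
      V * X = (K σ₂)⁻¹ * N *
        ((1 : Matrix (Fin m) (Fin m) ℂ) ⊗ₖ ((K σ₁)⁻¹ * B))) :
    C * (K σ₂)⁻¹ * N * ((1 : Matrix (Fin m) (Fin m) ℂ) ⊗ₖ (K σ₁)⁻¹) *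
        ((1 : Matrix (Fin m) (Fin m) ℂ) ⊗ₖ B) =
      (C * V) * (Wᴴ * K σ₂ * V)⁻¹ *
        (Wᴴ * N * ((1 : Matrix (Fin m) (Fin m) ℂ) ⊗ₖ V)) *
        ((1 : Matrix (Fin m) (Fin m) ℂ) ⊗ₖ (Wᴴ * K σ₁ * V)⁻¹) *
        ((1 : Matrix (Fin m) (Fin m) ℂ) ⊗ₖ (Wᴴ * B)) := by
  obtain ⟨X₁, h1⟩ := hV1
  obtain ⟨X₂, h2⟩ := hV2
  have e1 : Wᴴ * K σ₁ * V * X₁ = Wᴴ * B := by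
    rw [Matrix.mul_assoc (Wᴴ * K σ₁) V X₁, h1, Matrix.mul_assoc Wᴴ (K σ₁) _,
      ← Matrix.mul_assoc (K σ₁) (K σ₁)⁻¹ B, Matrix.mul_nonsing_inv _ hK1, Matrix.one_mul]
  have hX1 : (Wᴴ * K σ₁ * V)⁻¹ * (Wᴴ * B) = X₁ := by
    rw [← e1, ← Matrix.mul_assoc, Matrix.nonsing_inv_mul _ hKhat1, Matrix.one_mul]
  have e2 : Wᴴ * K σ₂ * V * X₂
      = Wᴴ * N * ((1 : Matrix (Fin m) (Fin m) ℂ) ⊗ₖ ((K σ₁)⁻¹ * B)) := by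
    rw [Matrix.mul_assoc (Wᴴ * K σ₂) V X₂, h2, Matrix.mul_assoc Wᴴ (K σ₂) _,
      ← Matrix.mul_assoc (K σ₂) ((K σ₂)⁻¹ * N) _, ← Matrix.mul_assoc (K σ₂) (K σ₂)⁻¹ N,
      Matrix.mul_nonsing_inv _ hK2, Matrix.one_mul, ← Matrix.mul_assoc]
  have hX2 : (Wᴴ * K σ₂ * V)⁻¹ *
      (Wᴴ * N * ((1 : Matrix (Fin m) (Fin m) ℂ) ⊗ₖ ((K σ₁)⁻¹ * B))) = X₂ := by
    rw [← e2, ← Matrix.mul_assoc, Matrix.nonsing_inv_mul _ hKhat2, Matrix.one_mul]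
  have lhs : C * (K σ₂)⁻¹ * N * ((1 : Matrix (Fin m) (Fin m) ℂ) ⊗ₖ (K σ₁)⁻¹) *
      ((1 : Matrix (Fin m) (Fin m) ℂ) ⊗ₖ B) = C * (V * X₂) := by
    rw [Matrix.mul_assoc (C * (K σ₂)⁻¹ * N), ← Matrix.mul_kronecker_mul, Matrix.one_mul, h2,
      ← Matrix.mul_assoc, ← Matrix.mul_assoc, Matrix.mul_assoc C]
  have rhs : (C * V) * (Wᴴ * K σ₂ * V)⁻¹ *
      (Wᴴ * N * ((1 : Matrix (Fin m) (Fin m) ℂ) ⊗ₖ V)) *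
      ((1 : Matrix (Fin m) (Fin m) ℂ) ⊗ₖ (Wᴴ * K σ₁ * V)⁻¹) *
      ((1 : Matrix (Fin m) (Fin m) ℂ) ⊗ₖ (Wᴴ * B)) = C * (V * X₂) := by
    rw [Matrix.mul_assoc _ ((1 : Matrix (Fin m) (Fin m) ℂ) ⊗ₖ (Wᴴ * K σ₁ * V)⁻¹),
      ← Matrix.mul_kronecker_mul, Matrix.one_mul, hX1,
      Matrix.mul_assoc (C * V * (Wᴴ * K σ₂ * V)⁻¹),
      Matrix.mul_assoc (Wᴴ * N), ← Matrix.mul_kronecker_mul, Matrix.one_mul, h1,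
      Matrix.mul_assoc (C * V), hX2, Matrix.mul_assoc]
  rw [lhs, rhs]
end
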